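/- arXiv:2302.05798 — 5 statements merged into one kernel-verified Lean document; each statement's English description precedes it below -/
import Mathlib

section
/- For every real z > 2√(2/3), the integral ∫_{−2√(2/3)}^{2√(2/3)} [(3/(4π))·√(8/3 − x²)] / (x − z) dx equals r(z) = (3/4)·(−z + √(z² − 8/3)). -/
/-! For `z > R > 0` the integrand splits as
`√(R² - x²) / (x - z) = -(x + z) / √(R² - x²) + (z² - R²) / ((z - x) √(R² - x²))`,
whose pieces integrate to `√(R² - x²) - z arcsin (x / R)` and, via the Möbius substitution
`x ↦ (R² - z x) / (R (z - x))` (which maps `[-R, R]` onto `[-1, 1]` reversing orientation),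
to `-√(z² - R²) arcsin ((R² - z x) / (R (z - x)))`. Evaluating at `±R` gives
`∫_{-R}^{R} √(R² - x²) / (x - z) dx = π (-z + √(z² - R²))`; take `R² = 8/3`. -/

noncomputable section

/-- Stieltjes transform of the semicircle law on `[-2√(2/3), 2√(2/3)]`, for `z > 2√(2/3)`. -/
def rST (z : ℝ) : ℝ := (3 / 4) * (-z + Real.sqrt (z ^ 2 - 8 / 3))

namespace Semicircle

open Real Set

theorem hasDerivAt_arcsin_comp {u : ℝ → ℝ} {u' w x : ℝ} (hu : HasDerivAt u u' x) (hw : 0 < w)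
    (h : 1 - u x ^ 2 = w ^ 2) : HasDerivAt (fun y => arcsin (u y)) (u' / w) x := by
  have hlt : |u x| < 1 := (sq_lt_one_iff_abs_lt_one _).mp (by nlinarith)
  have hsqrt : √(1 - u x ^ 2) = w := by rw [h, sqrt_sq hw.le]
  have := (hasDerivAt_arcsin (abs_lt.mp hlt).1.ne' (abs_lt.mp hlt).2.ne).comp x hu
  rwa [hsqrt, one_div_mul_eq_div] at this

def stieltjesPrimitive (R z x : ℝ) : ℝ :=
  √(R ^ 2 - x ^ 2) - z * arcsin (x / R)
    - √(z ^ 2 - R ^ 2) * arcsin ((R ^ 2 - z * x) / (R * (z - x)))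

section

variable {R z x : ℝ}

theorem sq_sub_sq_pos (hx : x ∈ Ioo (-R) R) : 0 < R ^ 2 - x ^ 2 := by
  nlinarith [hx.1, hx.2]

theorem hasDerivAt_sqrt_sq_sub_sq (hx : x ∈ Ioo (-R) R) :
    HasDerivAt (fun y => √(R ^ 2 - y ^ 2)) (-x / √(R ^ 2 - x ^ 2)) x := by
  have := ((hasDerivAt_pow 2 x).const_sub (R ^ 2)).sqrt (sq_sub_sq_pos hx).ne'
  convert this using 1
  field_simp
  ring

theorem hasDerivAt_arcsin_div (hx : x ∈ Ioo (-R) R) :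
    HasDerivAt (fun y => arcsin (y / R)) (1 / √(R ^ 2 - x ^ 2)) x := by
  have hR : 0 < R := by linarith [hx.1, hx.2]
  have hs := sq_sub_sq_pos hx
  have := hasDerivAt_arcsin_comp ((hasDerivAt_id' x).div_const R)
    (by positivity : 0 < √(R ^ 2 - x ^ 2) / R) (by rw [div_pow (√_), sq_sqrt hs.le]; field_simp)
  convert this using 1
  field_simp

theorem hasDerivAt_arcsin_moebius (hRz : R < z) (hx : x ∈ Ioo (-R) R) :
    HasDerivAt (fun y => arcsin ((R ^ 2 - z * y) / (R * (z - y))))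
      (-(√(z ^ 2 - R ^ 2) / ((z - x) * √(R ^ 2 - x ^ 2)))) x := by
  have hR : 0 < R := by linarith [hx.1, hx.2]
  have hzx : 0 < z - x := by linarith [hx.2]
  have hs := sq_sub_sq_pos hx
  have ht : 0 < z ^ 2 - R ^ 2 := by nlinarith
  have hu : HasDerivAt (fun y => (R ^ 2 - z * y) / (R * (z - y)))
      ((R ^ 2 - z ^ 2) / (R * (z - x) ^ 2)) x := by
    have := (((hasDerivAt_id' x).const_mul z).const_sub (R ^ 2)).fun_div
      (((hasDerivAt_id' x).const_sub z).const_mul R) (by positivity)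
    refine this.congr_deriv ?_
    field_simp
    ring
  have := hasDerivAt_arcsin_comp hu
    (by positivity : 0 < √(R ^ 2 - x ^ 2) * √(z ^ 2 - R ^ 2) / (R * (z - x)))
    (by rw [div_pow (_ * _), mul_pow, sq_sqrt hs.le, sq_sqrt ht.le]; field_simp; ring)
  convert this using 1
  field_simp
  rw [sq_sqrt ht.le]
  ring

theorem hasDerivAt_stieltjesPrimitive (hRz : R < z) (hx : x ∈ Ioo (-R) R) :
    HasDerivAt (stieltjesPrimitive R z) (√(R ^ 2 - x ^ 2) / (x - z)) x := by
  have hzx : 0 < z - x := by linarith [hx.2]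
  have hs := sq_sub_sq_pos hx
  have ht : 0 < z ^ 2 - R ^ 2 := by nlinarith [hx.1, hx.2]
  refine (((hasDerivAt_sqrt_sq_sub_sq hx).sub ((hasDerivAt_arcsin_div hx).const_mul z)).sub
    ((hasDerivAt_arcsin_moebius hRz hx).const_mul _)).congr_deriv ?_
  have hxz : x - z ≠ 0 := by linarith
  field_simp
  rw [sq_sqrt hs.le, sq_sqrt ht.le]
  ring

theorem continuousOn_stieltjesPrimitive (hR : 0 < R) (hRz : R < z) :
    ContinuousOn (stieltjesPrimitive R z) (Icc (-R) R) := by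
  have hden : ∀ x ∈ Icc (-R) R, R * (z - x) ≠ 0 := fun x hx => by
    have : 0 < z - x := by linarith [hx.2]
    positivity
  unfold stieltjesPrimitive
  fun_prop (disch := assumption)

theorem stieltjesPrimitive_sub (hR : 0 < R) (hRz : R < z) :
    stieltjesPrimitive R z R - stieltjesPrimitive R z (-R) = π * (-z + √(z ^ 2 - R ^ 2)) := by
  have hmoebius_R : (R ^ 2 - z * R) / (R * (z - R)) = -1 := by
    rw [div_eq_iff (by nlinarith)]; ring
  have hmoebius_neg_R : (R ^ 2 - z * -R) / (R * (z - -R)) = 1 := by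
    rw [div_eq_iff (by nlinarith)]; ring
  simp only [stieltjesPrimitive, hmoebius_R, hmoebius_neg_R, neg_div, div_self hR.ne', sub_self,
    neg_sq, sqrt_zero, arcsin_one, arcsin_neg]
  ring

theorem integral_sqrt_sq_sub_sq_div_sub (hR : 0 < R) (hRz : R < z) :
    ∫ x in -R..R, √(R ^ 2 - x ^ 2) / (x - z) = π * (-z + √(z ^ 2 - R ^ 2)) := by
  have hden : ∀ x ∈ uIcc (-R) R, x - z ≠ 0 := fun x hx => by
    rw [uIcc_of_le (by linarith)] at hx
    linarith [hx.2]
  have hint :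
      IntervalIntegrable (fun x => √(R ^ 2 - x ^ 2) / (x - z)) MeasureTheory.volume (-R) R :=
    ContinuousOn.intervalIntegrable (by fun_prop (disch := assumption))
  rw [intervalIntegral.integral_eq_sub_of_hasDerivAt_of_le (by linarith)
    (continuousOn_stieltjesPrimitive hR hRz) (fun x hx => hasDerivAt_stieltjesPrimitive hRz hx)
    hint, stieltjesPrimitive_sub hR hRz]

end

end Semicircle

/-- For real `z > 2√(2/3)`, the Stieltjes transform of the semicircle density
`(3/(4π)) √(8/3 − x²)` on `[-2√(2/3), 2√(2/3)]` equals `r(z) = (3/4)(−z + √(z² − 8/3))`. -/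
theorem semicircle_stieltjes_transform (z : ℝ) (hz : 2 * Real.sqrt (2 / 3) < z) :
    ∫ x in (-(2 * Real.sqrt (2 / 3)))..(2 * Real.sqrt (2 / 3)),
      ((3 / (4 * Real.pi)) * Real.sqrt (8 / 3 - x ^ 2)) / (x - z) = rST z := by
  have hR2 : (2 * √(2 / 3)) ^ 2 = 8 / 3 := by
    rw [mul_pow, Real.sq_sqrt (by norm_num)]; norm_num
  simp_rw [mul_div_assoc, intervalIntegral.integral_const_mul, ← hR2,
    Semicircle.integral_sqrt_sq_sub_sq_div_sub (by positivity) hz, rST, hR2]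
  field_simp

end
end

section
/- For every x ∈ ℝ, lim_{ε→0⁺} (1/π)·Im[r(x + iε)] = (3/(4π))·√(max(8/3 − x², 0)); that is, the Stieltjes inverse formula applied to r recovers the semicircle density of compact support [−2√(2/3), 2√(2/3)]. -/
/-!
Completing the square, `u = 2 s w + z` satisfies `u² = z² - 4s`, and `Im w > 0` forces `Im u > 0`.
The imaginary part of a square root with nonnegative imaginary part is `√((‖c‖ - Re c) / 2)`,
which is continuous in `c`; so `Im w` extends continuously to `ε = 0`, where it equals
`√(max (4s - x²) 0) / (2s)`. Here `s = 2/3`.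
-/

open Topology Filter

namespace Complex

theorem im_eq_sqrt_of_sq_eq {u c : ℂ} (h : u ^ 2 = c) (hu : 0 ≤ u.im) :
    u.im = √((‖c‖ - c.re) / 2) := by
  have hnorm : ‖c‖ = u.re ^ 2 + u.im ^ 2 := by
    rw [← h, norm_pow, Complex.sq_norm, normSq_apply]; ring
  have hre : c.re = u.re ^ 2 - u.im ^ 2 := by
    rw [← h, sq, mul_re]; ring
  rw [hnorm, hre, show (u.re ^ 2 + u.im ^ 2 - (u.re ^ 2 - u.im ^ 2)) / 2 = u.im ^ 2 by ring,
    Real.sqrt_sq hu]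

theorem norm_ofReal_sub_re_div_two (a : ℝ) : (‖(a : ℂ)‖ - (a : ℂ).re) / 2 = max (-a) 0 := by
  rw [norm_real, Real.norm_eq_abs, ofReal_re]
  rcases le_total 0 a with h | h
  · rw [abs_of_nonneg h, max_eq_right (by linarith)]; ring
  · rw [abs_of_nonpos h, max_eq_left (by linarith)]; ring

end Complex

theorem sq_two_mul_add_eq_of_quadratic {s z w : ℂ} (h : s * w ^ 2 + z * w + 1 = 0) :
    (2 * s * w + z) ^ 2 = z ^ 2 - 4 * s := by
  linear_combination 4 * s * h

/-- `Im w` for the root `w` of `s w² + z w + 1` with `Im w > 0`, at `z = x + iε`. -/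
noncomputable def upperRootIm (s x ε : ℝ) : ℝ :=
  let c : ℂ := (x + ε * Complex.I) ^ 2 - 4 * s
  (√((‖c‖ - c.re) / 2) - ε) / (2 * s)

theorem im_eq_upperRootIm {s : ℝ} (hs : 0 < s) {x ε : ℝ} (hε : 0 ≤ ε) {w : ℂ}
    (h : s * w ^ 2 + (x + ε * Complex.I) * w + 1 = 0) (hw : 0 < w.im) :
    w.im = upperRootIm s x ε := by
  set u := 2 * s * w + (x + ε * Complex.I)
  have hu : u.im = 2 * s * w.im + ε := by simp [u]
  have hsqrt := Complex.im_eq_sqrt_of_sq_eq (sq_two_mul_add_eq_of_quadratic h)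
    (by rw [hu]; positivity)
  rw [upperRootIm, ← hsqrt, hu]
  field_simp
  ring

theorem continuous_upperRootIm (s x : ℝ) : Continuous (upperRootIm s x) := by
  unfold upperRootIm
  fun_prop

theorem upperRootIm_zero (s x : ℝ) :
    upperRootIm s x 0 = √(max (4 * s - x ^ 2) 0) / (2 * s) := by
  have hreal : ((x : ℂ) + (0 : ℝ) * Complex.I) ^ 2 - 4 * s = ((x ^ 2 - 4 * s : ℝ) : ℂ) := by
    push_cast; ring
  rw [upperRootIm, hreal, Complex.norm_ofReal_sub_re_div_two, neg_sub, sub_zero]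

theorem tendsto_im_upperRoot {s : ℝ} (hs : 0 < s) (r : ℂ → ℂ)
    (hr : ∀ z : ℂ, 0 < z.im → s * r z ^ 2 + z * r z + 1 = 0 ∧ 0 < (r z).im) (x : ℝ) :
    Tendsto (fun ε : ℝ => (r (x + ε * Complex.I)).im) (𝓝[>] 0)
      (𝓝 (√(max (4 * s - x ^ 2) 0) / (2 * s))) := by
  rw [← upperRootIm_zero]
  refine ((continuous_upperRootIm s x).tendsto 0).mono_left nhdsWithin_le_nhds |>.congr' ?_
  filter_upwards [self_mem_nhdsWithin] with ε (hε : 0 < ε)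
  obtain ⟨hroot, hpos⟩ := hr (x + ε * Complex.I) (by simpa using hε)
  exact (im_eq_upperRootIm hs hε.le hroot hpos).symm

/-- **Stieltjes inverse formula for the semicircle law.** Let `r` be the Stieltjes transform of
the semicircle measure, i.e. for every `z` in the upper half-plane, `r z` is the (unique)
solution `w` of `(2/3) w² + z w + 1 = 0` with `Im w > 0`. Then for every real `x`,
`(1/π) Im r(x + iε) → (3/(4π)) √(max (8/3 − x²) 0)` as `ε → 0⁺`. -/
theorem stieltjes_inverse_semicircle (r : ℂ → ℂ)
    (hr : ∀ z : ℂ, 0 < z.im →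
      (2 / 3) * (r z) ^ 2 + z * r z + 1 = 0 ∧ 0 < (r z).im) :
    ∀ x : ℝ, Tendsto (fun ε : ℝ => (1 / Real.pi) * (r (x + ε * Complex.I)).im)
      (𝓝[>] 0) (𝓝 ((3 / (4 * Real.pi)) * Real.sqrt (max (8 / 3 - x ^ 2) 0))) := by
  intro x
  have hr' : ∀ z : ℂ, 0 < z.im →
      ((2 / 3 : ℝ) : ℂ) * r z ^ 2 + z * r z + 1 = 0 ∧ 0 < (r z).im := by
    push_cast; exact hr
  convert (tendsto_im_upperRoot (by norm_num) r hr' x).const_mul (1 / Real.pi) using 2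
  field_simp
  norm_num
  ring
end

section
/- For every z ∈ ℂ with Im z > 0, the quadratic equation (2/3)·w² + z·w + 1 = 0 has exactly one solution w ∈ ℂ with Im w > 0. -/
/-- For every `z` in the upper half-plane, the quadratic equation
`(2/3) w² + z w + 1 = 0` has exactly one solution `w` with `Im w > 0`. -/
theorem semicircle_quadratic_unique_upper_solution (z : ℂ) (hz : 0 < z.im) :
    ∃! w : ℂ, (2 / 3) * w ^ 2 + z * w + 1 = 0 ∧ 0 < w.im := by
  obtain ⟨s, hs⟩ := IsAlgClosed.exists_pow_nat_eq (z ^ 2 - 8/3 : ℂ) (n := 2) (by norm_num)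
  set w₁ := (3/4 : ℂ) * (-z + s) with hw1
  set w₂ := (3/4 : ℂ) * (-z - s) with hw2
  have hfac : ∀ w : ℂ, (2 / 3) * w ^ 2 + z * w + 1 = (2/3) * (w - w₁) * (w - w₂) := by
    intro w
    rw [hw1, hw2]
    linear_combination (3/8 : ℂ) * hs
  have hroot : ∀ w : ℂ, (2 / 3) * w ^ 2 + z * w + 1 = 0 ↔ (w = w₁ ∨ w = w₂) := by
    intro w
    rw [hfac w]
    constructor
    · intro h
      rcases mul_eq_zero.1 h with h | h
      · rcases mul_eq_zero.1 h with h | h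
        · norm_num at h
        · exact Or.inl (sub_eq_zero.1 h)
      · exact Or.inr (sub_eq_zero.1 h)
    · rintro (rfl | rfl) <;> ring
  have him : ∀ w : ℂ, (2 / 3) * w ^ 2 + z * w + 1 = 0 → w.im ≠ 0 := by
    intro w hw h0
    have h1 := congrArg Complex.im hw
    simp [Complex.add_im, Complex.mul_im, pow_two, h0] at h1
    -- h1 should give z.im * w.re = 0
    have hre : w.re = 0 := by
      rcases h1 with h1 | h1
      · exact absurd h1 (ne_of_gt hz)
      · exact h1
    have hw0 : w = 0 := by
      apply Complex.ext <;> simp [hre, h0]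
    rw [hw0] at hw
    norm_num at hw
  have hprod : w₁ * w₂ = 3/2 := by
    rw [hw1, hw2]
    linear_combination (-(9:ℂ)/16) * hs
  have hw1r : (2 / 3) * w₁ ^ 2 + z * w₁ + 1 = 0 := (hroot w₁).2 (Or.inl rfl)
  have hw2r : (2 / 3) * w₂ ^ 2 + z * w₂ + 1 = 0 := (hroot w₂).2 (Or.inr rfl)
  have hb := him w₁ hw1r
  have hd := him w₂ hw2r
  have hIm := congrArg Complex.im hprod
  have hRe := congrArg Complex.re hprod
  simp [Complex.mul_im, Complex.mul_re] at hIm hRe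
  -- hIm : w₁.re * w₂.im + w₁.im * w₂.re = 0
  -- hRe : w₁.re * w₂.re - w₁.im * w₂.im = 3/2
  have hkey : (3/2 : ℝ) * w₂.im = -w₁.im * (w₂.re ^ 2 + w₂.im ^ 2) := by
    linear_combination w₂.re * hIm - w₂.im * hRe
  have hpos : 0 < w₂.re ^ 2 + w₂.im ^ 2 := by positivity
  rcases lt_or_gt_of_ne hb with hb' | hb'
  · -- w₁.im < 0, so w₂.im > 0
    have hd' : 0 < w₂.im := by nlinarith
    refine ⟨w₂, ⟨hw2r, hd'⟩, ?_⟩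
    rintro y ⟨hy, hy'⟩
    rcases (hroot y).1 hy with rfl | rfl
    · linarith
    · rfl
  · -- w₁.im > 0, so w₂.im < 0
    have hd' : w₂.im < 0 := by nlinarith
    refine ⟨w₁, ⟨hw1r, hb'⟩, ?_⟩
    rintro y ⟨hy, hy'⟩
    rcases (hroot y).1 hy with rfl | rfl
    · rfl
    · linarith
end

section
/- For every real z > 2√(2/3), setting a = b = r(z)/3 with r(z) = (3/4)·(−z + √(z² − 8/3)) solves the fixed-point system with parameter τ = −1, namely (2b + z)·a + 1/3 = 0 and (a + z − τ·b)·b + 1/3 = 0; consequently q = a + 2b = r(z), i.e. for τ = −1 the limiting measure of Definition 1 reduces to the semicircle law. -/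
noncomputable section

/-- For `τ = -1`, the fixed-point system of Definition 1 is solved by `a = b = r(z)/3`, so that
`q = a + 2b = r(z)`: the limiting measure reduces to the semicircle law. -/
theorem fixed_point_tau_neg_one (z : ℝ) (hz : 2 * Real.sqrt (2 / 3) < z) :
    ∀ a b : ℝ, a = rST z / 3 → b = rST z / 3 →
      (2 * b + z) * a + 1 / 3 = 0 ∧
      (a + z - (-1 : ℝ) * b) * b + 1 / 3 = 0 ∧
      a + 2 * b = rST z := by
  intro a b ha hb
  have h0 : (0 : ℝ) ≤ 2 * Real.sqrt (2 / 3) := by positivity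
  have hzpos : 0 < z := lt_of_le_of_lt h0 hz
  have hsq : (2 * Real.sqrt (2 / 3)) ^ 2 = 8 / 3 := by
    rw [mul_pow, Real.sq_sqrt (by norm_num : (2:ℝ)/3 ≥ 0)]
    norm_num
  have hzz : z ^ 2 - 8 / 3 ≥ 0 := by
    nlinarith [sq_nonneg (Real.sqrt (2/3)), Real.sq_sqrt (by norm_num : (0:ℝ) ≤ 2/3)]
  have hs : Real.sqrt (z ^ 2 - 8 / 3) ^ 2 = z ^ 2 - 8 / 3 := Real.sq_sqrt hzz
  subst ha hb
  unfold rST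
  refine ⟨by nlinarith [hs], by nlinarith [hs], by ring⟩

end
end

section
/- Let n ∈ ℕ, let M and P be n×n Hermitian complex matrices, and let z ∈ ℂ with Im z ≠ 0. Then M − zI and M + P − zI are invertible, and |(1/n)·Tr((M + P − zI)⁻¹) − (1/n)·Tr((M − zI)⁻¹)| ≤ rank(P)·‖P‖ / (n·(Im z)²), where ‖P‖ is the operator norm of P. In particular, if ‖M‖ and ‖P‖ are bounded and rank(P) is bounded as n → ∞, the normalized traces of the two resolvents differ by O(1/n). -/
/-!
The resolvent identity `(M + P - z)⁻¹ - (M - z)⁻¹ = -(M + P - z)⁻¹ P (M - z)⁻¹` turns the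
difference of traces into `-Tr (P (M - z)⁻¹ (M + P - z)⁻¹)`. Diagonalizing `P` by a unitary,
this trace is a sum of `rank P` terms `λᵢ Bᵢᵢ`, each bounded by `‖P‖ ‖B‖`, where `B` is
unitarily conjugate to the product of the two resolvents. Each resolvent of a self-adjoint
element has norm at most `1 / |Im z|`, since its spectrum is real.
-/

open Matrix
open scoped Matrix.Norms.L2Operator

section CStarAlgebra

variable {A : Type*} [CStarAlgebra A] {a : A} {z : ℂ}

lemma IsSelfAdjoint.notMem_spectrum_of_im_ne_zero (ha : IsSelfAdjoint a) (hz : z.im ≠ 0) :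
    z ∉ spectrum ℂ a :=
  fun h ↦ hz (ha.im_eq_zero_of_mem_spectrum h)

lemma IsSelfAdjoint.isUnit_sub_algebraMap (ha : IsSelfAdjoint a) (hz : z.im ≠ 0) :
    IsUnit (a - algebraMap ℂ A z) := by
  simpa using (spectrum.notMem_iff.mp (ha.notMem_spectrum_of_im_ne_zero hz)).neg

lemma IsSelfAdjoint.norm_ringInverse_sub_algebraMap_le (ha : IsSelfAdjoint a) (hz : z.im ≠ 0) :
    ‖Ring.inverse (a - algebraMap ℂ A z)‖ ≤ |z.im|⁻¹ := by
  have hne : ∀ x ∈ spectrum ℂ a, x - z ≠ 0 := fun x hx h ↦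
    ha.notMem_spectrum_of_im_ne_zero hz (sub_eq_zero.mp h ▸ hx)
  have hcfc : cfc (fun x ↦ x - z) a = a - algebraMap ℂ A z := by
    rw [cfc_sub _ _ a, cfc_id' ℂ a, cfc_const z a]
  rw [← hcfc, ← cfc_inv _ a hne]
  refine norm_cfc_le (by positivity) fun x hx ↦ ?_
  rw [norm_inv]
  refine inv_anti₀ (abs_pos.mpr hz) ?_
  calc |z.im| = |(x - z).im| := by simp [ha.im_eq_zero_of_mem_spectrum hx]
    _ ≤ ‖x - z‖ := Complex.abs_im_le_norm _

end CStarAlgebra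

namespace Matrix

variable {𝕜 : Type*} [RCLike 𝕜] {m n : Type*} [Fintype m] [Fintype n] [DecidableEq n]

lemma norm_apply_le_l2_opNorm (A : Matrix m n 𝕜) (i : m) (j : n) : ‖A i j‖ ≤ ‖A‖ := by
  have h := A.l2_opNorm_mulVec (EuclideanSpace.single j 1)
  rw [PiLp.norm_single, norm_one, mul_one] at h
  refine le_trans (le_of_eq ?_) ((PiLp.norm_apply_le _ i).trans h)
  simp

lemma norm_trace_diagonal_mul_le (d : n → 𝕜) (B : Matrix n n 𝕜) :
    ‖(diagonal d * B).trace‖ ≤ (diagonal d).rank * ‖diagonal d‖ * ‖B‖ := by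
  classical
  rw [rank_diagonal, Fintype.card_subtype, l2_opNorm_diagonal]
  calc ‖(diagonal d * B).trace‖ = ‖∑ i ∈ {i | d i ≠ 0}, d i * B i i‖ := by
        rw [Finset.sum_filter_of_ne fun i _ h ↦ left_ne_zero_of_mul h]
        simp [trace, diagonal_mul]
    _ ≤ ∑ i ∈ {i | d i ≠ 0}, ‖d‖ * ‖B‖ := by
        refine norm_sum_le_of_le _ fun i _ ↦ ?_
        rw [norm_mul]
        exact mul_le_mul (norm_le_pi_norm d i) (norm_apply_le_l2_opNorm B i i)
          (norm_nonneg _) (norm_nonneg _)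
    _ = _ := by rw [Finset.sum_const, nsmul_eq_mul, mul_assoc]

lemma IsHermitian.norm_trace_mul_le {P : Matrix n n 𝕜} (hP : P.IsHermitian) (X : Matrix n n 𝕜) :
    ‖(P * X).trace‖ ≤ P.rank * ‖P‖ * ‖X‖ := by
  set U := hP.eigenvectorUnitary
  set D : Matrix n n 𝕜 := diagonal (RCLike.ofReal ∘ hP.eigenvalues)
  have hPUD : P = U * D * star U := by
    rw [hP.spectral_theorem]; rfl
  have hrank : P.rank = D.rank := by
    rw [hPUD, rank_mul_eq_left_of_isUnit_det _ _ (UnitaryGroup.det_isUnit (star U)),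
      rank_mul_eq_right_of_isUnit_det _ _ (UnitaryGroup.det_isUnit U)]
  have hnorm : ‖P‖ = ‖D‖ := by
    rw [hPUD, CStarRing.norm_mul_coe_unitary, CStarRing.norm_coe_unitary_mul]
  have htrace : (P * X).trace = (D * (star U * X * U)).trace := by
    rw [hPUD, mul_assoc, mul_assoc, trace_mul_comm]
    simp only [mul_assoc]
  have hX : ‖(star U * X * U : Matrix n n 𝕜)‖ = ‖X‖ := by
    rw [CStarRing.norm_mul_coe_unitary, CStarRing.norm_coe_unitary_mul (star U)]
  rw [htrace, hrank, hnorm, ← hX]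
  exact norm_trace_diagonal_mul_le _ _

variable {M P : Matrix n n ℂ} {z : ℂ}

lemma IsHermitian.isUnit_sub_smul_one (hM : M.IsHermitian) (hz : z.im ≠ 0) :
    IsUnit (M - z • (1 : Matrix n n ℂ)) := by
  simpa [Algebra.algebraMap_eq_smul_one] using hM.isSelfAdjoint.isUnit_sub_algebraMap hz

lemma IsHermitian.norm_inv_sub_smul_one_le (hM : M.IsHermitian) (hz : z.im ≠ 0) :
    ‖(M - z • (1 : Matrix n n ℂ))⁻¹‖ ≤ |z.im|⁻¹ := by
  simpa [Algebra.algebraMap_eq_smul_one, nonsing_inv_eq_ringInverse] using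
    hM.isSelfAdjoint.norm_ringInverse_sub_algebraMap_le hz

lemma IsHermitian.norm_trace_inv_add_sub_smul_one_sub_le (hM : M.IsHermitian)
    (hP : P.IsHermitian) (hz : z.im ≠ 0) :
    ‖((M + P - z • (1 : Matrix n n ℂ))⁻¹).trace - ((M - z • (1 : Matrix n n ℂ))⁻¹).trace‖
      ≤ P.rank * ‖P‖ / z.im ^ 2 := by
  set R₁ := (M - z • (1 : Matrix n n ℂ))⁻¹
  set R₂ := (M + P - z • (1 : Matrix n n ℂ))⁻¹
  have hunits : IsUnit (M + P - z • 1) ↔ IsUnit (M - z • (1 : Matrix n n ℂ)) :=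
    iff_of_true ((hM.add hP).isUnit_sub_smul_one hz) (hM.isUnit_sub_smul_one hz)
  have hresolvent : R₂ - R₁ = -(R₂ * P * R₁) := by
    rw [inv_sub_inv hunits, show M - z • 1 - (M + P - z • 1) = -P by abel, mul_neg, neg_mul]
  have hR : ‖R₁ * R₂‖ ≤ 1 / z.im ^ 2 :=
    calc ‖R₁ * R₂‖ ≤ ‖R₁‖ * ‖R₂‖ := l2_opNorm_mul _ _
      _ ≤ |z.im|⁻¹ * |z.im|⁻¹ := mul_le_mul (hM.norm_inv_sub_smul_one_le hz)
          ((hM.add hP).norm_inv_sub_smul_one_le hz) (norm_nonneg _) (by positivity)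
      _ = 1 / z.im ^ 2 := by rw [← mul_inv, abs_mul_abs_self, one_div, sq]
  calc ‖R₂.trace - R₁.trace‖ = ‖(P * (R₁ * R₂)).trace‖ := by
        rw [← trace_sub, hresolvent, trace_neg, norm_neg, trace_mul_cycle, trace_mul_comm]
    _ ≤ P.rank * ‖P‖ * (1 / z.im ^ 2) :=
        (hP.norm_trace_mul_le _).trans (mul_le_mul_of_nonneg_left hR (by positivity))
    _ = P.rank * ‖P‖ / z.im ^ 2 := by rw [mul_one_div]

end Matrix

/-- **Quantitative perturbation lemma for resolvent traces.** For Hermitian `n×n` matrices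
`M, P` and nonreal `z`, both resolvents exist and the normalized traces of the resolvents of
`M + P` and `M` differ by at most `rank(P) ‖P‖ / (n (Im z)²)`, where `‖·‖` is the operator
norm. -/
theorem resolvent_trace_perturbation {n : ℕ}
    (M P : Matrix (Fin n) (Fin n) ℂ) (hM : M.IsHermitian) (hP : P.IsHermitian)
    (z : ℂ) (hz : z.im ≠ 0) :
    IsUnit (M - z • (1 : Matrix (Fin n) (Fin n) ℂ)) ∧
    IsUnit (M + P - z • (1 : Matrix (Fin n) (Fin n) ℂ)) ∧
    ‖(1 / (n : ℂ)) * ((M + P - z • (1 : Matrix (Fin n) (Fin n) ℂ))⁻¹).trace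
        - (1 / (n : ℂ)) * ((M - z • (1 : Matrix (Fin n) (Fin n) ℂ))⁻¹).trace‖
      ≤ (P.rank : ℝ) * ‖P‖ / ((n : ℝ) * z.im ^ 2) := by
  refine ⟨hM.isUnit_sub_smul_one hz, (hM.add hP).isUnit_sub_smul_one hz, ?_⟩
  calc _ = (n : ℝ)⁻¹ * ‖((M + P - z • (1 : Matrix (Fin n) (Fin n) ℂ))⁻¹).trace
              - ((M - z • (1 : Matrix (Fin n) (Fin n) ℂ))⁻¹).trace‖ := by
        rw [← mul_sub, norm_mul]; simp
    _ ≤ (n : ℝ)⁻¹ * (P.rank * ‖P‖ / z.im ^ 2) := by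
        gcongr; exact hM.norm_trace_inv_add_sub_smul_one_sub_le hP hz
    _ = P.rank * ‖P‖ / (n * z.im ^ 2) := by ring
end
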